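/- For all m, n ≥ 0, the composition identity Z_{mn} = Z_n ∘ Z_m holds in ℤ[X], i.e. (Z n).comp (Z m) = Z (m*n). -/
import Mathlib


open Polynomial

/-- Lucas-type polynomials: `l 0 = 2`, `l 1 = X`, `l n = X * l (n-1) - l (n-2)`. -/
noncomputable def lucPoly : ℕ → ℤ[X]
  | 0 => 2
  | 1 => X
  | (n + 2) => X * lucPoly (n + 1) - lucPoly n

/-- Herbig's variant of the spread polynomials: `Z n = 2 - lₙ(2 - X)`. -/
noncomputable def Zpoly (n : ℕ) : ℤ[X] := 2 - (lucPoly n).comp (2 - X)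

lemma lucPoly_eq_dickson : ∀ n, lucPoly n = dickson 1 (1 : ℤ) n
  | 0 => by simp [lucPoly, dickson]; norm_num
  | 1 => by simp [lucPoly, dickson]
  | (n + 2) => by
      rw [lucPoly, dickson, lucPoly_eq_dickson (n + 1), lucPoly_eq_dickson n]
      simp

lemma lucPoly_mul (m n : ℕ) : lucPoly (m * n) = (lucPoly n).comp (lucPoly m) := by
  simp only [lucPoly_eq_dickson]
  rw [mul_comm, dickson_one_one_mul]

theorem Zpoly_comp (m n : ℕ) : (Zpoly n).comp (Zpoly m) = Zpoly (m * n) := by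
  simp only [Zpoly, lucPoly_mul, sub_comp, comp_assoc]
  congr 2
  · simp
  · simp [sub_comp]
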